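/- arXiv:1509.07207 — 2 statements merged into one kernel-verified Lean document; each statement's English description precedes it below -/
import Mathlib

section
/- Let G be a parity game, and suppose a lifting sequence is applied in which a vertex v with P(v) = k is the first vertex whose measure value becomes ⊤ (so ρ_N = Lift(ρ_{N−1}, v)). If v ∈ V_Odd, then there exists a successor w ∈ post(v) whose measure ρ_{N−1}(w) is a tuple (not ⊤) saturated up to position k, i.e., (ρ_{N−1}(w))ᵢ = nᵢ for every odd i ≤ k (and, as always, 0 at even positions ≤ k). If v ∈ V_Even, then every successor w ∈ post(v) satisfies this. -/
/-! Before step `N` no measure is `⊤`, so `Lift(ρ_{N-1}, v)(v) = ⊤` forces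
`Prog(ρ_{N-1}, v, w) = ⊤` for some successor `w` (Odd takes the maximum) or for every
successor `w` (Even takes the minimum). As `Prog` is the least element of `M_Even` satisfying
the progress condition, it is `⊤` only when no tuple qualifies: if `P(v)` is even, `ρ_{N-1}(w)`
itself would, and if `P(v)` is odd, so would `ρ_{N-1}(w)` with an unsaturated odd entry
`i ≤ P(v)` raised by one. Lifting preserves `M_Even`-valuedness, which bounds the entries
of `ρ_{N-1}(w)` by `nᵢ`. -/

open Classical

noncomputable section

instance (priority := 5000) (n : ℕ) : WellFoundedLT (Fin n) :=
  Finite.to_wellFoundedLT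

noncomputable instance (priority := 5000) (n : ℕ) : LinearOrder (Lex (Fin n → ℕ)) :=
  inferInstance

/-- Least element of a set, if it exists; otherwise a default value. -/
def sLeast {α : Type*} [Preorder α] (s : Set α) (dflt : α) : α :=
  if h : ∃ a, IsLeast s a then h.choose else dflt

/-- Greatest element of a set, if it exists; otherwise a default value. -/
def sGreatest {α : Type*} [Preorder α] (s : Set α) (dflt : α) : α :=
  if h : ∃ a, IsGreatest s a then h.choose else dflt

/-- A parity game: a finite set of vertices with a total edge relation, a priority
function and an ownership function (`ownerEven v = true` iff `v ∈ V_Even`). -/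
structure ParityGame (V : Type*) [Fintype V] where
  E : V → V → Prop
  total : ∀ v, ∃ w, E v w
  prio : V → ℕ
  ownerEven : V → Bool

namespace ParityGame

variable {V : Type*} [Fintype V] [DecidableEq V] (G : ParityGame V)

/-- `d` is one plus the maximal priority occurring in the game. -/
def d : ℕ := (Finset.univ.sup G.prio) + 1

/-- The domain of (extended) measures: `⊤` together with `d`-tuples of naturals,
ordered lexicographically with `⊤` maximal.  This is `M_Even_ext` (together with
tuples that are nonzero at even positions, which are never used). -/
abbrev Meas : Type _ := WithTop (Lex (Fin G.d → ℕ))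

/-- `nP i` is the number of vertices of priority `i`. -/
def nP (i : ℕ) : ℕ := (Finset.univ.filter (fun v => G.prio v = i)).card

/-- Membership in `M_Even`: `⊤`, or a `d`-tuple which is `0` at even positions and
bounded by `nP i` at odd positions `i`. -/
def inMEven (m : G.Meas) : Prop :=
  m = ⊤ ∨ ∃ f : Fin G.d → ℕ, m = ((toLex f : Lex (Fin G.d → ℕ)) : G.Meas) ∧
    ∀ i : Fin G.d, (Even (i : ℕ) → f i = 0) ∧ (¬ Even (i : ℕ) → f i ≤ G.nP (i : ℕ))

/-- Membership in `M_Even_ext`: `⊤`, or a `d`-tuple which is `0` at even positions. -/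
def inMEvenExt (m : G.Meas) : Prop :=
  m = ⊤ ∨ ∃ f : Fin G.d → ℕ, m = ((toLex f : Lex (Fin G.d → ℕ)) : G.Meas) ∧
    ∀ i : Fin G.d, Even (i : ℕ) → f i = 0

/-- Truncation of a measure to components `0, …, k` (other components set to `0`);
`⊤` is mapped to `⊤`. -/
def trunc (k : ℕ) (m : G.Meas) : G.Meas :=
  WithTop.map (fun f : Lex (Fin G.d → ℕ) => toLex (fun j : Fin G.d => if (j : ℕ) ≤ k then ofLex f j else 0)) m

/-- `a ≥_k b` : comparison of measures on components `0, …, k` only. -/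
def geAt (k : ℕ) (a b : G.Meas) : Prop := G.trunc k b ≤ G.trunc k a

/-- `a >_k b` : strict comparison of measures on components `0, …, k` only. -/
def gtAt (k : ℕ) (a b : G.Meas) : Prop := G.trunc k b < G.trunc k a

/-- The defining condition of `Prog(ρ,v,w)`. -/
def progCond (ρ : V → G.Meas) (v w : V) (m : G.Meas) : Prop :=
  if Even (G.prio v) then G.geAt (G.prio v) m (ρ w)
  else (G.gtAt (G.prio v) m (ρ w) ∨ (m = ⊤ ∧ ρ w = ⊤))

/-- `Prog(ρ,v,w)`: the least element of `M_Even` satisfying `progCond`. -/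
def Prog (ρ : V → G.Meas) (v w : V) : G.Meas :=
  if h : ∃ m, IsLeast {m | G.inMEven m ∧ G.progCond ρ v w m} m then h.choose else ⊤

/-- `ρ` takes values in `M_Even`. -/
def IsMeasure (ρ : V → G.Meas) : Prop := ∀ v, G.inMEven (ρ v)

/-- Game parity progress measure. -/
def IsGPM (ρ : V → G.Meas) : Prop :=
  G.IsMeasure ρ ∧ ∀ v,
    (G.ownerEven v = true → ∃ w, G.E v w ∧ G.geAt (G.prio v) (ρ v) (G.Prog ρ v w)) ∧
    (G.ownerEven v = false → ∀ w, G.E v w → G.geAt (G.prio v) (ρ v) (G.Prog ρ v w))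

/-- A play: an infinite `E`-path. -/
def IsPlay (π : ℕ → V) : Prop := ∀ n, G.E (π n) (π (n + 1))

/-- Priority `p` occurs infinitely often on `π`. -/
def InfOft (π : ℕ → V) (p : ℕ) : Prop := ∀ N, ∃ n, N ≤ n ∧ G.prio (π n) = p

/-- A play is won by Even iff the least priority occurring infinitely often is even. -/
def WonByEven (π : ℕ → V) : Prop := Even (sInf {p | G.InfOft π p})

/-- Won by player `i` (`true` = Even, `false` = Odd). -/
def WonBy (i : Bool) (π : ℕ → V) : Prop :=
  if i then G.WonByEven π else ¬ G.WonByEven π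

/-- The history of a play before time `n`. -/
def hist (π : ℕ → V) (n : ℕ) : List V := List.ofFn (fun k : Fin n => π (k : ℕ))

/-- A (history-dependent) strategy for player `i` is valid if it always moves along edges
from vertices of player `i`. -/
def ValidStrat (i : Bool) (σ : List V → V → V) : Prop :=
  ∀ h v, G.ownerEven v = i → G.E v (σ h v)

/-- Consistency of a play with a history-dependent strategy of player `i`. -/
def ConsH (i : Bool) (σ : List V → V → V) (π : ℕ → V) : Prop :=
  ∀ n, G.ownerEven (π n) = i → π (n + 1) = σ (hist π n) (π n)

/-- Consistency of a play with a positional strategy of player `i`. -/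
def ConsP (i : Bool) (σ : V → V) (π : ℕ → V) : Prop :=
  ∀ n, G.ownerEven (π n) = i → π (n + 1) = σ (π n)

/-- Winning region of player `i`: vertices from which `i` has a winning strategy. -/
def WinRegion (i : Bool) : Set V :=
  {v | ∃ σ : List V → V → V, G.ValidStrat i σ ∧
    ∀ π, G.IsPlay π → π 0 = v → G.ConsH i σ π → G.WonBy i π}

/-- The `i`-attractor into `U`. -/
def Attr (i : Bool) (U : Set V) : Set V :=
  ⋂₀ {A | U ⊆ A ∧
    (∀ v, G.ownerEven v = i → (∃ w, G.E v w ∧ w ∈ A) → v ∈ A) ∧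
    (∀ v, G.ownerEven v ≠ i → (∀ w, G.E v w → w ∈ A) → v ∈ A)}

/-- The guarded attractor `Attr^{≥k}_{Odd,W}(U)`. -/
def GAttr (k : ℕ) (W U : Set V) : Set V :=
  ⋂₀ {A | U ⊆ A ∧ A ⊆ W ∩ {v | k ≤ G.prio v} ∧
    ∀ u ∈ W ∩ {v | k ≤ G.prio v},
      (G.ownerEven u = false → (∃ w, G.E u w ∧ w ∈ A) → u ∈ A) ∧
      (G.ownerEven u = true → (∀ w, G.E u w → w ∈ W → w ∈ A) → u ∈ A)}

/-- The lifting operator `Lift(ρ, v)`. -/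
def Lift (ρ : V → G.Meas) (v : V) : V → G.Meas :=
  Function.update ρ v
    (if G.ownerEven v = true
      then max (ρ v) (sLeast {m | ∃ w, G.E v w ∧ m = G.Prog ρ v w} ⊤)
      else max (ρ v) (sGreatest {m | ∃ w, G.E v w ∧ m = G.Prog ρ v w} ⊤))

/-- The all-zero measure. -/
def zeroMeas : G.Meas := ((toLex (fun _ : Fin G.d => 0) : Lex (Fin G.d → ℕ)) : G.Meas)

/-- A lifting sequence `ρ₀, …, ρ_N` in which `v` is the first vertex lifted to `⊤`. -/
def FirstTop (ρs : ℕ → V → G.Meas) (N : ℕ) (v : V) : Prop :=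
  (∀ u, ρs 0 u = G.zeroMeas) ∧
  (∀ j < N, ∃ u, ρs (j + 1) = G.Lift (ρs j) u ∧
    (∀ w, ρs j w ≤ ρs (j + 1) w) ∧ ρs j ≠ ρs (j + 1)) ∧
  (∀ j < N, ∀ w, ρs j w ≠ ⊤) ∧
  ρs N v = ⊤

/-- The prefix `π 0 … π l` of a play is an `i`-dominated stretch. -/
def domStretchPrefix (π : ℕ → V) (i l : ℕ) : Prop :=
  (∀ m ≤ l, i ≤ G.prio (π m)) ∧ (∃ m ≤ l, G.prio (π m) = i)

/-- The degree of the prefix `π 0 … π l` with respect to priority `i`: the number of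
its vertices of priority `i`. -/
def degree (π : ℕ → V) (i l : ℕ) : ℕ :=
  ((Finset.range (l + 1)).filter (fun m => G.prio (π m) = i)).card

/-- The value `θ(π)` of a play: `⊤` if `π` is won by Odd, and otherwise the tuple whose
component at each odd position `i` is the degree of the maximal `i`-dominated stretch
that is a prefix of `π` (and `0` if there is no such prefix). -/
def theta (π : ℕ → V) : G.Meas :=
  if G.WonByEven π then
    ((toLex (fun j : Fin G.d =>
      if Even (j : ℕ) then 0
      else sSup {c | ∃ l, G.domStretchPrefix π (j : ℕ) l ∧ c = G.degree π (j : ℕ) l}) :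
        Lex (Fin G.d → ℕ)) : G.Meas)
  else ⊤

/-- `U` is an `i`-dominion inside the subgame induced on `W`. -/
def IsDominionIn (W : Set V) (i : Bool) (U : Set V) : Prop :=
  ∃ σ : List V → V → V,
    (∀ h u, u ∈ W → G.ownerEven u = i → G.E u (σ h u) ∧ σ h u ∈ W) ∧
    ∀ π, G.IsPlay π → (∀ n, π n ∈ W) → π 0 ∈ U → G.ConsH i σ π →
      (∀ n, π n ∈ U) ∧ G.WonBy i π

/-- `U` is an `i`-dominion in `G`. -/
def IsDominion (i : Bool) (U : Set V) : Prop := G.IsDominionIn Set.univ i U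

/-- Winning region of player `i` in the subgame induced on `W`. -/
def WinIn (W : Set V) (i : Bool) : Set V :=
  {v | v ∈ W ∧ ∃ σ : List V → V → V,
    (∀ h u, u ∈ W → G.ownerEven u = i → G.E u (σ h u) ∧ σ h u ∈ W) ∧
    ∀ π, G.IsPlay π → (∀ n, π n ∈ W) → π 0 = v → G.ConsH i σ π → G.WonBy i π}

end ParityGame

section ExtremalChoice

variable {α : Type*} {s : Set α} {dflt : α}

theorem sLeast_mem_insert [Preorder α] : sLeast s dflt ∈ insert dflt s := by
  unfold sLeast
  split
  · exact Or.inr (Exists.choose_spec ‹∃ a, IsLeast s a›).1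
  · exact Or.inl rfl

theorem sGreatest_mem_insert [Preorder α] : sGreatest s dflt ∈ insert dflt s := by
  unfold sGreatest
  split
  · exact Or.inr (Exists.choose_spec ‹∃ a, IsGreatest s a›).1
  · exact Or.inl rfl

theorem sLeast_le [LinearOrder α] [WellFoundedLT α] {a : α} (ha : a ∈ s) :
    sLeast s dflt ≤ a := by
  have hex : ∃ b, IsLeast s b :=
    ⟨wellFounded_lt.min s ⟨a, ha⟩, wellFounded_lt.min_mem s ⟨a, ha⟩,
      fun _ hb => wellFounded_lt.min_le hb⟩
  rw [sLeast, dif_pos hex]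
  exact hex.choose_spec.2 ha

theorem sGreatest_mem [LinearOrder α] (hs : s.Finite) (hne : s.Nonempty) :
    sGreatest s dflt ∈ s := by
  obtain ⟨a, ha, hmax⟩ := Set.exists_max_image s id hs hne
  have hex : ∃ b, IsGreatest s b := ⟨a, ha, hmax⟩
  rw [sGreatest, dif_pos hex]
  exact hex.choose_spec.1

theorem eq_top_of_max_eq_top [LinearOrder α] [OrderTop α] {a b : α} (ha : a ≠ ⊤)
    (h : max a b = ⊤) : b = ⊤ :=
  not_ne_iff.1 fun hb => (max_lt (lt_top_iff_ne_top.2 ha) (lt_top_iff_ne_top.2 hb)).ne h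

end ExtremalChoice

namespace ParityGame

variable {V : Type*} [Fintype V] {G : ParityGame V}

def IsSaturatedUpTo (G : ParityGame V) (k : ℕ) (f : Fin G.d → ℕ) : Prop :=
  ∀ i : Fin G.d, (i : ℕ) ≤ k →
    (¬ Even (i : ℕ) → f i = G.nP (i : ℕ)) ∧ (Even (i : ℕ) → f i = 0)

theorem inMEven_coe_iff {f : Fin G.d → ℕ} :
    G.inMEven ((toLex f : Lex (Fin G.d → ℕ)) : G.Meas) ↔
      ∀ i : Fin G.d, (Even (i : ℕ) → f i = 0) ∧ (¬ Even (i : ℕ) → f i ≤ G.nP (i : ℕ)) := by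
  simp only [inMEven, WithTop.coe_ne_top, false_or, WithTop.coe_inj, toLex_inj]
  exact ⟨fun ⟨_, hg, hgp⟩ => hg ▸ hgp, fun h => ⟨f, rfl, h⟩⟩

theorem inMEven_top : G.inMEven ⊤ := Or.inl rfl

theorem inMEven_zeroMeas : G.inMEven G.zeroMeas :=
  inMEven_coe_iff.2 fun _ => ⟨fun _ => rfl, fun _ => Nat.zero_le _⟩

theorem trunc_coe (k : ℕ) (f : Fin G.d → ℕ) :
    G.trunc k ((toLex f : Lex (Fin G.d → ℕ)) : G.Meas) =
      ((toLex (fun j : Fin G.d => if (j : ℕ) ≤ k then f j else 0) : Lex (Fin G.d → ℕ)) :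
        G.Meas) :=
  rfl

theorem progCond_top (ρ : V → G.Meas) (v w : V) : G.progCond ρ v w ⊤ := by
  unfold progCond geAt gtAt
  split
  · exact le_top
  · rcases eq_or_ne (ρ w) ⊤ with h | h
    · exact Or.inr ⟨rfl, h⟩
    · obtain ⟨g, hg⟩ := WithTop.ne_top_iff_exists.1 h
      rw [← hg]
      exact Or.inl (WithTop.coe_lt_top _)

theorem isLeast_prog (ρ : V → G.Meas) (v w : V) :
    IsLeast {m | G.inMEven m ∧ G.progCond ρ v w m} (G.Prog ρ v w) := by
  have hne : {m | G.inMEven m ∧ G.progCond ρ v w m}.Nonempty :=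
    ⟨⊤, inMEven_top, progCond_top ρ v w⟩
  have hex : ∃ m, IsLeast {m | G.inMEven m ∧ G.progCond ρ v w m} m :=
    ⟨_, wellFounded_lt.min_mem _ hne, fun _ hm => wellFounded_lt.min_le hm⟩
  rw [Prog, dif_pos hex]
  exact hex.choose_spec

theorem prog_ne_top_of_mem {ρ : V → G.Meas} {v w : V} {m : G.Meas} (hm : G.inMEven m)
    (hcond : G.progCond ρ v w m) (hne : m ≠ ⊤) : G.Prog ρ v w ≠ ⊤ :=
  ne_top_of_le_ne_top hne ((isLeast_prog ρ v w).2 ⟨hm, hcond⟩)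

theorem IsMeasure.lift [DecidableEq V] {ρ : V → G.Meas} (hρ : G.IsMeasure ρ) (u : V) :
    G.IsMeasure (G.Lift ρ u) := by
  intro x
  rcases eq_or_ne x u with rfl | hx
  · have hprogs : ∀ m ∈ insert ⊤ {m | ∃ w, G.E x w ∧ m = G.Prog ρ x w}, G.inMEven m := by
      rintro m (rfl | ⟨w, -, rfl⟩)
      exacts [inMEven_top, (isLeast_prog ρ x w).1.1]
    rw [Lift, Function.update_self]
    split
    · rcases max_choice (ρ x) (sLeast {m | ∃ w, G.E x w ∧ m = G.Prog ρ x w} ⊤) with h | h <;>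
        rw [h]
      exacts [hρ x, hprogs _ sLeast_mem_insert]
    · rcases max_choice (ρ x) (sGreatest {m | ∃ w, G.E x w ∧ m = G.Prog ρ x w} ⊤) with h | h <;>
        rw [h]
      exacts [hρ x, hprogs _ sGreatest_mem_insert]
  · rw [Lift, Function.update_of_ne hx]
    exact hρ x

namespace FirstTop

variable [DecidableEq V] {ρs : ℕ → V → G.Meas} {N : ℕ} {v : V}

theorem isMeasure (h : G.FirstTop ρs N v) {j : ℕ} (hj : j ≤ N) : G.IsMeasure (ρs j) := by
  induction j with
  | zero => exact fun u => h.1 u ▸ inMEven_zeroMeas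
  | succ j ih =>
    obtain ⟨u, hu, -⟩ := h.2.1 j (by omega)
    exact hu ▸ (ih (by omega)).lift u

theorem pos (h : G.FirstTop ρs N v) : 0 < N := by
  refine Nat.pos_of_ne_zero fun hN => ?_
  have hv := h.2.2.2
  rw [hN, h.1 v, zeroMeas] at hv
  exact WithTop.coe_ne_top hv

end FirstTop

theorem not_even_prio_of_prog_eq_top {ρ : V → G.Meas} {v w : V} (hm : G.inMEven (ρ w))
    (hne : ρ w ≠ ⊤) (hp : G.Prog ρ v w = ⊤) : ¬ Even (G.prio v) := fun he =>
  prog_ne_top_of_mem hm (by rw [progCond, if_pos he]; exact le_rfl) hne hp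

theorem gtAt_update_succ {k : ℕ} {f : Fin G.d → ℕ} {i : Fin G.d} (hi : (i : ℕ) ≤ k) :
    G.gtAt k ((toLex (Function.update f i (f i + 1)) : Lex (Fin G.d → ℕ)) : G.Meas)
      ((toLex f : Lex (Fin G.d → ℕ)) : G.Meas) := by
  rw [gtAt, trunc_coe, trunc_coe, WithTop.coe_lt_coe]
  have htrunc : (fun j : Fin G.d => if (j : ℕ) ≤ k then Function.update f i (f i + 1) j else 0) =
      Function.update (fun j : Fin G.d => if (j : ℕ) ≤ k then f j else 0) i (f i + 1) := by
    ext j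
    rcases eq_or_ne j i with rfl | hj <;> simp [*]
  rw [htrunc]
  exact Pi.lt_toLex_update_self_iff.2 (by simp [hi])

theorem exists_isSaturatedUpTo_of_prog_eq_top {ρ : V → G.Meas} {v w : V}
    (hm : G.inMEven (ρ w)) (hne : ρ w ≠ ⊤) (hp : G.Prog ρ v w = ⊤) :
    ∃ f : Fin G.d → ℕ, ρ w = ((toLex f : Lex (Fin G.d → ℕ)) : G.Meas) ∧
      G.IsSaturatedUpTo (G.prio v) f := by
  have hodd := not_even_prio_of_prog_eq_top hm hne hp
  obtain ⟨g, hg⟩ := WithTop.ne_top_iff_exists.1 hne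
  set f := ofLex g
  have hf : ρ w = ((toLex f : Lex (Fin G.d → ℕ)) : G.Meas) := hg.symm
  rw [hf, inMEven_coe_iff] at hm
  refine ⟨f, hf, fun i hi => ⟨fun hiodd => ?_, (hm i).1⟩⟩
  by_contra hsat
  have hlt : f i < G.nP i := lt_of_le_of_ne ((hm i).2 hiodd) hsat
  refine prog_ne_top_of_mem (m := ((toLex (Function.update f i (f i + 1)) : Lex _) : G.Meas))
    ?_ ?_ WithTop.coe_ne_top hp
  · refine inMEven_coe_iff.2 fun j => ?_
    rcases eq_or_ne j i with rfl | hj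
    · simpa [hiodd] using hlt
    · simpa [hj] using hm j
  · rw [progCond, if_neg hodd, hf]
    exact Or.inl (gtAt_update_succ hi)

section Lift

variable [DecidableEq V] {ρ : V → G.Meas} {v : V}

theorem exists_prog_eq_top_of_lift_self_eq_top (hv : ρ v ≠ ⊤) (ho : G.ownerEven v = false)
    (h : G.Lift ρ v v = ⊤) : ∃ w, G.E v w ∧ G.Prog ρ v w = ⊤ := by
  rw [Lift, Function.update_self, if_neg (by simp [ho])] at h
  have hfin : {m | ∃ w, G.E v w ∧ m = G.Prog ρ v w}.Finite :=
    (Set.finite_range (G.Prog ρ v)).subset (by rintro _ ⟨w, -, rfl⟩; exact ⟨w, rfl⟩)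
  have hne : {m | ∃ w, G.E v w ∧ m = G.Prog ρ v w}.Nonempty :=
    let ⟨w, hw⟩ := G.total v
    ⟨_, w, hw, rfl⟩
  obtain ⟨w, hw, hp⟩ := eq_top_of_max_eq_top hv h ▸ sGreatest_mem hfin hne
  exact ⟨w, hw, hp.symm⟩

theorem prog_eq_top_of_lift_self_eq_top (hv : ρ v ≠ ⊤) (ho : G.ownerEven v = true)
    (h : G.Lift ρ v v = ⊤) {w : V} (hw : G.E v w) : G.Prog ρ v w = ⊤ := by
  rw [Lift, Function.update_self, if_pos ho] at h
  exact top_le_iff.1 (eq_top_of_max_eq_top hv h ▸ sLeast_le ⟨w, hw, rfl⟩)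

end Lift

end ParityGame

open ParityGame

theorem first_top_vertex_has_saturated_successor_general
    {V : Type*} [Fintype V] [DecidableEq V] (G : ParityGame V)
    (ρs : ℕ → V → G.Meas) (N : ℕ) (v : V)
    (hft : G.FirstTop ρs N v)
    (hstep : ρs N = G.Lift (ρs (N - 1)) v) :
    (G.ownerEven v = false → ∃ w, G.E v w ∧ ∃ f : Fin G.d → ℕ,
      ρs (N - 1) w = ((toLex f : Lex (Fin G.d → ℕ)) : G.Meas) ∧
      ∀ i : Fin G.d, (i : ℕ) ≤ G.prio v →
        (¬ Even (i : ℕ) → f i = G.nP (i : ℕ)) ∧ (Even (i : ℕ) → f i = 0)) ∧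
    (G.ownerEven v = true → ∀ w, G.E v w → ∃ f : Fin G.d → ℕ,
      ρs (N - 1) w = ((toLex f : Lex (Fin G.d → ℕ)) : G.Meas) ∧
      ∀ i : Fin G.d, (i : ℕ) ≤ G.prio v →
        (¬ Even (i : ℕ) → f i = G.nP (i : ℕ)) ∧ (Even (i : ℕ) → f i = 0)) := by
  have hN : N - 1 < N := Nat.sub_lt hft.pos one_pos
  have hbelow : ∀ w, ρs (N - 1) w ≠ ⊤ := hft.2.2.1 (N - 1) hN
  have hmeas : G.IsMeasure (ρs (N - 1)) := hft.isMeasure hN.le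
  have htop : G.Lift (ρs (N - 1)) v v = ⊤ := hstep ▸ hft.2.2.2
  have hsat : ∀ w, G.Prog (ρs (N - 1)) v w = ⊤ → ∃ f : Fin G.d → ℕ,
      ρs (N - 1) w = ((toLex f : Lex (Fin G.d → ℕ)) : G.Meas) ∧ G.IsSaturatedUpTo (G.prio v) f :=
    fun w => exists_isSaturatedUpTo_of_prog_eq_top (hmeas w) (hbelow w)
  refine ⟨fun ho => ?_, fun ho w hw =>
    hsat w (prog_eq_top_of_lift_self_eq_top (hbelow v) ho htop hw)⟩
  obtain ⟨w, hw, hp⟩ := exists_prog_eq_top_of_lift_self_eq_top (hbelow v) ho htop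
  exact ⟨w, hw, hsat w hp⟩

/-- when `v` with priority `k` is the first vertex lifted to `⊤`, some
successor of `v` (all successors, if `v ∈ V_Even`) carries a non-`⊤` measure saturated
up to position `k`. -/
theorem first_top_vertex_has_saturated_successor
    {V : Type*} [Fintype V] [DecidableEq V] (G : ParityGame V)
    (ρs : ℕ → V → G.Meas) (N : ℕ) (v : V)
    (hft : G.FirstTop ρs N v) (hN : 0 < N)
    (hstep : ρs N = G.Lift (ρs (N - 1)) v) :
    (G.ownerEven v = false → ∃ w, G.E v w ∧ ∃ f : Fin G.d → ℕ,
      ρs (N - 1) w = ((toLex f : Lex (Fin G.d → ℕ)) : G.Meas) ∧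
      ∀ i : Fin G.d, (i : ℕ) ≤ G.prio v →
        (¬ Even (i : ℕ) → f i = G.nP (i : ℕ)) ∧ (Even (i : ℕ) → f i = 0)) ∧
    (G.ownerEven v = true → ∀ w, G.E v w → ∃ f : Fin G.d → ℕ,
      ρs (N - 1) w = ((toLex f : Lex (Fin G.d → ℕ)) : G.Meas) ∧
      ∀ i : Fin G.d, (i : ℕ) ≤ G.prio v →
        (¬ Even (i : ℕ) → f i = G.nP (i : ℕ)) ∧ (Even (i : ℕ) → f i = 0)) :=
  first_top_vertex_has_saturated_successor_general G ρs N v hft hstep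

end
end

section
/- Let G be a parity game and let ρ be any game parity progress measure of G. Define a positional strategy σ for player Even by choosing, for each v ∈ V_Even with ρ(v) ≠ ⊤, some successor w ∈ post(v) with ρ(v) ≥_{P(v)} Prog(ρ,v,w). Then σ is a winning strategy for Even from every vertex v with ρ(v) ≠ ⊤; in particular, every vertex v with ρ(v) ≠ ⊤ belongs to W_Even(G). -/
open Classical

noncomputable section

open ParityGame

/-! Along a play from `v` that follows `σ`, the measure `ρ` never reaches `⊤`, and each move from
a vertex of priority `k` does not increase `ρ` on components `0, …, k`, strictly decreasing it
there when `k` is odd. If the least priority `p` occurring infinitely often were odd, then from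
the point where all priorities are `≥ p` on, the truncations of `ρ` to components `0, …, p` would
form a non-increasing sequence in a well-founded order that strictly decreases infinitely often. -/

open Filter

theorem Filter.not_frequently_lt_of_eventually_le {α : Type*} [PartialOrder α] [WellFoundedLT α]
    {f : ℕ → α} (hle : ∀ᶠ n in atTop, f (n + 1) ≤ f n) :
    ¬ ∃ᶠ n in atTop, f (n + 1) < f n := by
  obtain ⟨N, hN⟩ := eventually_atTop.1 hle
  have hanti : Antitone fun k => f (N + k) :=
    antitone_nat_of_succ_le fun k => hN (N + k) (Nat.le_add_right N k)
  obtain ⟨n₀, hn₀⟩ := WellFoundedLT.antitone_chain_condition hanti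
  refine not_frequently.2 (eventually_atTop.2 ⟨N + n₀, fun n hn => ?_⟩)
  obtain ⟨k, rfl⟩ : ∃ k, n = N + k := ⟨n - N, by omega⟩
  have hk : n₀ ≤ k := by omega
  exact ((hn₀ k hk).symm.trans (hn₀ (k + 1) (hk.trans k.le_succ))).symm.not_lt

namespace ParityGame

variable {V : Type*} [Fintype V] (G : ParityGame V)

lemma trunc_eq_top_iff {k : ℕ} {m : G.Meas} : G.trunc k m = ⊤ ↔ m = ⊤ :=
  WithTop.map_eq_top_iff

lemma trunc_lt_trunc_of_le {p k : ℕ} (hpk : p ≤ k) {a b : G.Meas}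
    (h : G.trunc p a < G.trunc p b) : G.trunc k a < G.trunc k b := by
  induction b using WithTop.recTopCoe with
  | top => exact WithTop.lt_top_iff_ne_top.2 fun ha => (G.trunc_eq_top_iff.1 ha ▸ h).false
  | coe g =>
    induction a using WithTop.recTopCoe with
    | top => exact absurd h not_top_lt
    | coe f =>
      obtain ⟨i, hbelow, hi⟩ := WithTop.coe_lt_coe.1 h
      have hip : (i : ℕ) ≤ p := by
        by_contra hip
        simp [hip] at hi
      refine WithTop.coe_lt_coe.2 ⟨i, fun j hj => ?_, ?_⟩
      · have hjp : (j : ℕ) ≤ p := (Fin.lt_def.1 hj).le.trans hip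
        simpa [hjp, hjp.trans hpk] using hbelow j hj
      · simpa [hip, hip.trans hpk] using hi

lemma geAt_of_le {p k : ℕ} (hpk : p ≤ k) {a b : G.Meas} (h : G.geAt k a b) : G.geAt p a b :=
  not_lt.1 fun hlt => (G.trunc_lt_trunc_of_le hpk hlt).not_ge h

lemma ne_top_of_geAt {k : ℕ} {a b : G.Meas} (h : G.geAt k a b) (ha : a ≠ ⊤) : b ≠ ⊤ := by
  rintro rfl
  exact ha (G.trunc_eq_top_iff.1 (top_le_iff.1 h))

section Prog

variable {G} {ρ : V → G.Meas} {v w : V}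

lemma progCond_Prog (h : G.Prog ρ v w ≠ ⊤) : G.progCond ρ v w (G.Prog ρ v w) := by
  unfold Prog at h ⊢
  split_ifs at h ⊢ with hleast
  · exact hleast.choose_spec.1.2
  · exact absurd rfl h

lemma gtAt_Prog (h : G.Prog ρ v w ≠ ⊤) (hodd : ¬ Even (G.prio v)) :
    G.gtAt (G.prio v) (G.Prog ρ v w) (ρ w) := by
  have hcond := progCond_Prog h
  rw [progCond, if_neg hodd] at hcond
  exact hcond.resolve_right fun htop => h htop.1

lemma geAt_Prog (h : G.Prog ρ v w ≠ ⊤) : G.geAt (G.prio v) (G.Prog ρ v w) (ρ w) := by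
  by_cases heven : Even (G.prio v)
  · simpa [progCond, heven] using progCond_Prog h
  · exact (gtAt_Prog h heven).le

lemma geAt_of_geAt_Prog (hv : ρ v ≠ ⊤) (h : G.geAt (G.prio v) (ρ v) (G.Prog ρ v w)) :
    G.geAt (G.prio v) (ρ v) (ρ w) :=
  (geAt_Prog (G.ne_top_of_geAt h hv)).trans h

lemma gtAt_of_geAt_Prog (hv : ρ v ≠ ⊤) (h : G.geAt (G.prio v) (ρ v) (G.Prog ρ v w))
    (hodd : ¬ Even (G.prio v)) : G.gtAt (G.prio v) (ρ v) (ρ w) :=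
  (gtAt_Prog (G.ne_top_of_geAt h hv) hodd).trans_le h

end Prog

lemma infOft_iff_frequently {π : ℕ → V} {p : ℕ} :
    G.InfOft π p ↔ ∃ᶠ n in atTop, G.prio (π n) = p :=
  frequently_atTop.symm

lemma exists_infOft (π : ℕ → V) : ∃ p, G.InfOft π p := by
  obtain ⟨u, hu⟩ := frequently_exists.1 <|
    Frequently.of_forall (f := atTop) fun n => (⟨π n, rfl⟩ : ∃ u, π n = u)
  exact ⟨G.prio u, G.infOft_iff_frequently.2 (hu.mono fun n hn => by rw [hn])⟩

lemma eventually_sInf_infOft_le_prio (π : ℕ → V) :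
    ∀ᶠ n in atTop, sInf {p | G.InfOft π p} ≤ G.prio (π n) := by
  have hrare : ∀ q ∈ Finset.range (sInf {p | G.InfOft π p}),
      ∀ᶠ n in atTop, G.prio (π n) ≠ q := fun q hq =>
    not_frequently.1 fun hfreq => Nat.notMem_of_lt_sInf (Finset.mem_range.1 hq)
      (G.infOft_iff_frequently.2 hfreq)
  exact ((eventually_all_finset _).2 hrare).mono fun n hn =>
    not_lt.1 fun hlt => hn _ (Finset.mem_range.2 hlt) rfl

theorem wonByEven_of_descent {π : ℕ → V} {μ : ℕ → G.Meas}
    (hge : ∀ n, G.geAt (G.prio (π n)) (μ n) (μ (n + 1)))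
    (hgt : ∀ n, ¬ Even (G.prio (π n)) → G.gtAt (G.prio (π n)) (μ n) (μ (n + 1))) :
    G.WonByEven π := by
  set p := sInf {q | G.InfOft π q}
  have hp : G.InfOft π p := Nat.sInf_mem (G.exists_infOft π)
  by_contra hodd
  refine not_frequently_lt_of_eventually_le (f := fun n => G.trunc p (μ n)) ?_ ?_
  · exact (G.eventually_sInf_infOft_le_prio π).mono fun n hn => G.geAt_of_le hn (hge n)
  · exact (G.infOft_iff_frequently.1 hp).mono fun n hn => hn ▸ hgt n (hn ▸ hodd)

section Strategy

variable {G} {ρ : V → G.Meas} {σ : V → V}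

lemma geAt_Prog_of_consistent_move (hgpm : G.IsGPM ρ)
    (hσ : ∀ v, G.ownerEven v = true → ρ v ≠ ⊤ →
      G.E v (σ v) ∧ G.geAt (G.prio v) (ρ v) (G.Prog ρ v (σ v)))
    {v w : V} (he : G.E v w) (hv : ρ v ≠ ⊤) (hw : G.ownerEven v = true → w = σ v) :
    G.geAt (G.prio v) (ρ v) (G.Prog ρ v w) := by
  cases ho : G.ownerEven v with
  | false => exact (hgpm.2 v).2 ho w he
  | true => exact hw ho ▸ (hσ v ho hv).2

theorem wonByEven_of_consistent (hgpm : G.IsGPM ρ)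
    (hσ : ∀ v, G.ownerEven v = true → ρ v ≠ ⊤ →
      G.E v (σ v) ∧ G.geAt (G.prio v) (ρ v) (G.Prog ρ v (σ v)))
    {π : ℕ → V} (hπ : G.IsPlay π) (h0 : ρ (π 0) ≠ ⊤)
    (hcons : ∀ n, G.ownerEven (π n) = true → ρ (π n) ≠ ⊤ → π (n + 1) = σ (π n)) :
    G.WonByEven π := by
  have hProg (n : ℕ) (hn : ρ (π n) ≠ ⊤) :
      G.geAt (G.prio (π n)) (ρ (π n)) (G.Prog ρ (π n) (π (n + 1))) :=
    geAt_Prog_of_consistent_move hgpm hσ (hπ n) hn fun ho => hcons n ho hn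
  have hne (n : ℕ) : ρ (π n) ≠ ⊤ := by
    induction n with
    | zero => exact h0
    | succ n ih => exact G.ne_top_of_geAt (geAt_of_geAt_Prog ih (hProg n ih)) ih
  exact G.wonByEven_of_descent (μ := fun n => ρ (π n))
    (fun n => geAt_of_geAt_Prog (hne n) (hProg n (hne n)))
    (fun n => gtAt_of_geAt_Prog (hne n) (hProg n (hne n)))

end Strategy

end ParityGame

theorem progress_measure_yields_even_winning_strategy_general
    {V : Type*} [Fintype V] (G : ParityGame V)
    (ρ : V → G.Meas) (hgpm : G.IsGPM ρ) (σ : V → V)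
    (hσ : ∀ v, G.ownerEven v = true → ρ v ≠ ⊤ →
      G.E v (σ v) ∧ G.geAt (G.prio v) (ρ v) (G.Prog ρ v (σ v))) :
    ∀ v : V, ρ v ≠ ⊤ →
      (∀ π : ℕ → V, G.IsPlay π → π 0 = v →
        (∀ n, G.ownerEven (π n) = true → ρ (π n) ≠ ⊤ → π (n + 1) = σ (π n)) →
        G.WonByEven π) ∧
      v ∈ G.WinRegion true := by
  intro v hv
  refine ⟨fun π hπ h0 hcons => wonByEven_of_consistent hgpm hσ hπ (h0 ▸ hv) hcons,
    -- `σ` may leave the edge relation where `ρ = ⊤`; any edge will do there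
    fun _ u => if G.ownerEven u = true ∧ ρ u ≠ ⊤ then σ u else (G.total u).choose,
    fun _ u _ => ?_, fun π hπ h0 hcons => ?_⟩
  · dsimp only
    split_ifs with h
    · exact (hσ u h.1 h.2).1
    · exact (G.total u).choose_spec
  · exact wonByEven_of_consistent hgpm hσ hπ (h0 ▸ hv) fun n ho hne =>
      (hcons n ho).trans (if_pos ⟨ho, hne⟩)

/-- from any game parity progress measure `ρ`, a positional strategy for
Even chosen so that `ρ(v) ≥_{P(v)} Prog(ρ, v, σ(v))` on non-`⊤` Even vertices is
winning for Even from every vertex with non-`⊤` measure. -/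
theorem progress_measure_yields_even_winning_strategy
    {V : Type*} [Fintype V] [DecidableEq V] (G : ParityGame V)
    (ρ : V → G.Meas) (hgpm : G.IsGPM ρ) (σ : V → V)
    (hσ : ∀ v, G.ownerEven v = true → ρ v ≠ ⊤ →
      G.E v (σ v) ∧ G.geAt (G.prio v) (ρ v) (G.Prog ρ v (σ v))) :
    ∀ v : V, ρ v ≠ ⊤ →
      (∀ π : ℕ → V, G.IsPlay π → π 0 = v →
        (∀ n, G.ownerEven (π n) = true → ρ (π n) ≠ ⊤ → π (n + 1) = σ (π n)) →
        G.WonByEven π) ∧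
      v ∈ G.WinRegion true :=
  progress_measure_yields_even_winning_strategy_general G ρ hgpm σ hσ
end
end
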